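/- Let n ∈ ℕ, let \tilde{R}_n be a symmetrized Hammersley type point set with N = 2^{n+2} points (for an arbitrary fixed choice function σ), and let D be its local discrepancy function. For all j1, j2 ∈ ℕ₀ with j1 + j2 ≥ n − 1, j1 ≤ n, j2 ≤ n, and all m1 ∈ {0,…,2^{j1}−1}, m2 ∈ {0,…,2^{j2}−1}, the Haar coefficient satisfies |μ_{(j1,j2),(m1,m2)}(D)| ≤ 2^{−(n+j1+j2)}. -/

import Mathlib

/-!
Expanding the local discrepancy, the Haar coefficient equals
`N⁻¹ ∑_z c₁(x_z) c₂(y_z) - (∫ t h_{j₁,m₁}(t) dt) (∫ t h_{j₂,m₂}(t) dt)`, where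
`c(x) = ∫ 1[x < t] h_{j,m}(t) dt` is bounded by `2^{-(j+1)}` and vanishes unless `x` lies in the
open dyadic interval `I_{j,m}`, and where `∫ t h_{j,m}(t) dt = -2^{-(2j+2)}`.
If `(x, y) ∈ R_n` has `x ∈ int I_{j₁,m₁}` and `y ∈ int I_{j₂,m₂}`, then `x` fixes the digits `t_i`
with `i > n - j₁` and `y` those with `i ≤ j₂`; as `j₁ + j₂ ≥ n - 1` at most one digit is free,
so each of the four reflections of `R_n` contributes at most two nonzero terms. The sum is thus
at most `8 · 2^{-(j₁+j₂+2)} / 2^{n+2} = 2^{-(n+j₁+j₂+1)}`, and the product term is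
`2^{-(2j₁+2j₂+4)} ≤ 2^{-(n+j₁+j₂+3)}`.
-/

open MeasureTheory Set

/-- The L∞-normalized Haar function `h_{j,m}` on `[0,1)`: it is `+1` on the left half
`[2m/2^{j+1}, (2m+1)/2^{j+1})` of the dyadic interval `I_{j,m}`, `-1` on the right half
`[(2m+1)/2^{j+1}, (2m+2)/2^{j+1})`, and `0` elsewhere. -/
noncomputable def haar (j m : ℕ) (t : ℝ) : ℝ :=
  if (2 * m : ℝ) / 2 ^ (j + 1) ≤ t ∧ t < (2 * m + 1 : ℝ) / 2 ^ (j + 1) then 1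
  else if (2 * m + 1 : ℝ) / 2 ^ (j + 1) ≤ t ∧ t < (2 * m + 2 : ℝ) / 2 ^ (j + 1) then -1
  else 0

/-- First coordinate of a point of the Hammersley type point set:
`t_n/2 + t_{n-1}/2^2 + ⋯ + t_1/2^n`, where the index `i : Fin n` corresponds to `t_{i+1}`,
so the digit `t i` gets divided by `2^{n - i}`. -/
noncomputable def hamX (n : ℕ) (t : Fin n → Bool) : ℝ :=
  ∑ i : Fin n, (if t i then (1 : ℝ) else 0) / 2 ^ (n - i.val)

/-- Second coordinate of a point of the Hammersley type point set:
`s_1/2 + s_2/2^2 + ⋯ + s_n/2^n` with `s_i = t_i` if `σ i = false` and `s_i = 1 - t_i`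
if `σ i = true`, i.e. `s_i = t_i XOR σ i`. -/
noncomputable def hamY (n : ℕ) (σ : Fin n → Bool) (t : Fin n → Bool) : ℝ :=
  ∑ i : Fin n, (if (t i).xor (σ i) then (1 : ℝ) else 0) / 2 ^ (i.val + 1)

/-- The points of the symmetrized Hammersley type multiset `R̃_n`, parametrized by a digit
vector `t` and two reflection bits: `(x,y)`, `(x,1-y)`, `(1-x,y)`, `(1-x,1-y)`. -/
noncomputable def symPoint (n : ℕ) (σ : Fin n → Bool) (z : (Fin n → Bool) × Bool × Bool) :
    ℝ × ℝ :=
  (if z.2.1 then 1 - hamX n z.1 else hamX n z.1,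
   if z.2.2 then 1 - hamY n σ z.1 else hamY n σ z.1)

/-- The local discrepancy function of the symmetrized Hammersley type multiset `R̃_n`
with `N = 2^{n+2}` points counted with multiplicity. -/
noncomputable def discSym (n : ℕ) (σ : Fin n → Bool) (t1 t2 : ℝ) : ℝ :=
  (∑ z : (Fin n → Bool) × Bool × Bool,
      if (symPoint n σ z).1 < t1 ∧ (symPoint n σ z).2 < t2 then (1 : ℝ) else 0) / 2 ^ (n + 2)
    - t1 * t2

open Finset

theorem Nat.cast_ofBits_div_two_pow {n : ℕ} (f : Fin n → Bool) :
    (Nat.ofBits f : ℝ) / 2 ^ n = ∑ i : Fin n, (if f i then (1 : ℝ) else 0) / 2 ^ (n - i.val) := by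
  induction n with
  | zero => simp
  | succ n ih =>
    rw [Nat.ofBits_succ, Fin.sum_univ_succ]
    have := ih (f ∘ Fin.succ)
    simp only [Function.comp_apply] at this
    simp only [Fin.val_succ, Fin.val_zero, Nat.add_sub_add_right, ← this]
    cases f 0 <;> simp [pow_succ] <;> ring

theorem Nat.testBit_eq_of_div_two_pow_eq {x y k i : ℕ} (h : x / 2 ^ k = y / 2 ^ k) (hi : k ≤ i) :
    x.testBit i = y.testBit i := by
  obtain ⟨d, rfl⟩ := Nat.exists_eq_add_of_le' hi
  rw [← Nat.testBit_div_two_pow, h, Nat.testBit_div_two_pow]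

theorem Nat.apply_eq_of_ofBits_div_two_pow_eq {n k : ℕ} {f g : Fin n → Bool}
    (h : Nat.ofBits f / 2 ^ k = Nat.ofBits g / 2 ^ k) (i : Fin n) (hi : k ≤ i) : f i = g i := by
  simpa using Nat.testBit_eq_of_div_two_pow_eq h hi

theorem hamX_eq_ofBits (n : ℕ) (t : Fin n → Bool) : hamX n t = (Nat.ofBits t : ℝ) / 2 ^ n :=
  (Nat.cast_ofBits_div_two_pow t).symm

theorem hamY_eq_ofBits (n : ℕ) (σ t : Fin n → Bool) :
    hamY n σ t = (Nat.ofBits (fun i => (t i.rev).xor (σ i.rev)) : ℝ) / 2 ^ n := by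
  rw [Nat.cast_ofBits_div_two_pow, hamY]
  refine (Equiv.sum_comp Fin.revPerm _).symm.trans (Finset.sum_congr rfl fun i _ => ?_)
  simp only [Fin.revPerm_apply, Fin.val_rev]
  congr 2
  omega

theorem div_two_pow_sub_eq_of_mem_Ioo {j n m K : ℕ} (hj : j ≤ n)
    (h : (K : ℝ) / 2 ^ n ∈ Ioo ((m : ℝ) / 2 ^ j) ((m + 1) / 2 ^ j)) : K / 2 ^ (n - j) = m := by
  have hn : (2 : ℝ) ^ n = 2 ^ (n - j) * 2 ^ j := by rw [← pow_add, Nat.sub_add_cancel hj]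
  obtain ⟨hlo, hhi⟩ := h
  rw [hn, div_lt_div_iff₀ (by positivity) (by positivity)] at hlo hhi
  have hlo' : (m : ℝ) * 2 ^ (n - j) < K :=
    lt_of_mul_lt_mul_right (by linarith) (by positivity : (0 : ℝ) ≤ 2 ^ j)
  have hhi' : (K : ℝ) < (m + 1) * 2 ^ (n - j) :=
    lt_of_mul_lt_mul_right (by linarith) (by positivity : (0 : ℝ) ≤ 2 ^ j)
  exact Nat.div_eq_of_lt_le (by exact_mod_cast hlo'.le) (by exact_mod_cast hhi')

theorem mem_Ioo_of_one_sub_mem_Ioo {j m : ℕ} (hm : m < 2 ^ j) {x : ℝ}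
    (h : 1 - x ∈ Ioo ((m : ℝ) / 2 ^ j) ((m + 1) / 2 ^ j)) :
    x ∈ Ioo (((2 ^ j - 1 - m : ℕ) : ℝ) / 2 ^ j) (((2 ^ j - 1 - m : ℕ) + 1) / 2 ^ j) := by
  have hcast : ((2 ^ j - 1 - m : ℕ) : ℝ) = 2 ^ j - 1 - m := by
    rw [Nat.sub_sub, Nat.cast_sub (by omega)]
    push_cast
    ring
  have hp : (0 : ℝ) < 2 ^ j := by positivity
  have hlo : (2 ^ j - 1 - m : ℝ) / 2 ^ j = 1 - (m + 1) / 2 ^ j := by field_simp; ring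
  have hhi : (2 ^ j - 1 - m + 1 : ℝ) / 2 ^ j = 1 - m / 2 ^ j := by field_simp; ring
  rw [hcast, hlo, hhi]
  exact ⟨by linarith [h.2], by linarith [h.1]⟩

theorem exists_mem_Ioo_of_reflect_mem_Ioo {j m : ℕ} (hm : m < 2 ^ j) (b : Bool) :
    ∃ m' : ℕ, ∀ x : ℝ, (if b then 1 - x else x) ∈ Ioo ((m : ℝ) / 2 ^ j) ((m + 1) / 2 ^ j) →
      x ∈ Ioo ((m' : ℝ) / 2 ^ j) ((m' + 1) / 2 ^ j) := by
  cases b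
  · exact ⟨m, fun x h => h⟩
  · exact ⟨_, fun x h => mem_Ioo_of_one_sub_mem_Ioo hm h⟩

theorem card_hammersley_mem_box_le_two {n j1 j2 : ℕ} (σ : Fin n → Bool) (hj : n ≤ j1 + j2 + 1)
    (hj1 : j1 ≤ n) (hj2 : j2 ≤ n) (m1 m2 : ℕ) :
    #{t : Fin n → Bool | hamX n t ∈ Ioo ((m1 : ℝ) / 2 ^ j1) ((m1 + 1) / 2 ^ j1)
      ∧ hamY n σ t ∈ Ioo ((m2 : ℝ) / 2 ^ j2) ((m2 + 1) / 2 ^ j2)} ≤ 2 := by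
  -- `x` pins the digits `i ≥ n - j1` and `y` those with `i < j2`, so only digit `j2` is free.
  refine (card_le_card_of_injOn (t := univ)
    (fun t : Fin n → Bool => if h : j2 < n then t ⟨j2, h⟩ else false)
    (fun _ _ => mem_univ _) ?_).trans_eq rfl
  intro t ht u hu htu
  simp only [mem_coe, mem_filter, Finset.mem_univ, true_and, hamX_eq_ofBits, hamY_eq_ofBits]
    at ht hu
  have hquot {j m K K' : ℕ} (hj : j ≤ n)
      (hK : (K : ℝ) / 2 ^ n ∈ Ioo ((m : ℝ) / 2 ^ j) ((m + 1) / 2 ^ j))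
      (hK' : (K' : ℝ) / 2 ^ n ∈ Ioo ((m : ℝ) / 2 ^ j) ((m + 1) / 2 ^ j)) :
      K / 2 ^ (n - j) = K' / 2 ^ (n - j) :=
    (div_two_pow_sub_eq_of_mem_Ioo hj hK).trans (div_two_pow_sub_eq_of_mem_Ioo hj hK').symm
  have hX : ∀ i : Fin n, n - j1 ≤ i → t i = u i :=
    Nat.apply_eq_of_ofBits_div_two_pow_eq (hquot hj1 ht.1 hu.1)
  have hY : ∀ i : Fin n, i < j2 → t i = u i := fun i hi => by
    simpa using Nat.apply_eq_of_ofBits_div_two_pow_eq (hquot hj2 ht.2 hu.2) i.rev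
      (by simp only [Fin.val_rev]; omega)
  funext i
  by_cases hi2 : (i : ℕ) < j2
  · exact hY i hi2
  by_cases hi1 : n - j1 ≤ (i : ℕ)
  · exact hX i hi1
  have hi : i = ⟨j2, by omega⟩ := Fin.ext (show (i : ℕ) = j2 by omega)
  simpa [hi, show j2 < n by omega] using htu

theorem card_symPoint_mem_box_le_eight {n j1 j2 m1 m2 : ℕ} (σ : Fin n → Bool)
    (hj : n ≤ j1 + j2 + 1) (hj1 : j1 ≤ n) (hj2 : j2 ≤ n) (hm1 : m1 < 2 ^ j1) (hm2 : m2 < 2 ^ j2) :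
    #{z | (symPoint n σ z).1 ∈ Ioo ((m1 : ℝ) / 2 ^ j1) ((m1 + 1) / 2 ^ j1)
      ∧ (symPoint n σ z).2 ∈ Ioo ((m2 : ℝ) / 2 ^ j2) ((m2 + 1) / 2 ^ j2)} ≤ 8 := by
  have hfiber : ∀ b : Bool × Bool,
      #{t | (symPoint n σ (t, b)).1 ∈ Ioo ((m1 : ℝ) / 2 ^ j1) ((m1 + 1) / 2 ^ j1)
        ∧ (symPoint n σ (t, b)).2 ∈ Ioo ((m2 : ℝ) / 2 ^ j2) ((m2 + 1) / 2 ^ j2)} ≤ 2 := by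
    rintro ⟨b1, b2⟩
    obtain ⟨m1', hm1'⟩ := exists_mem_Ioo_of_reflect_mem_Ioo hm1 b1
    obtain ⟨m2', hm2'⟩ := exists_mem_Ioo_of_reflect_mem_Ioo hm2 b2
    refine (card_le_card fun t ht => ?_).trans
      (card_hammersley_mem_box_le_two σ hj hj1 hj2 m1' m2')
    simp only [mem_filter, Finset.mem_univ, true_and] at ht ⊢
    exact ⟨hm1' _ ht.1, hm2' _ ht.2⟩
  rw [card_filter, Fintype.sum_prod_type_right]
  calc _ ≤ ∑ _b : Bool × Bool, 2 := sum_le_sum fun b _ => (card_filter _ _).symm.trans_le (hfiber b)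
    _ = 8 := rfl

theorem haar_eq_indicator_sub_indicator (j m : ℕ) :
    haar j m = (Ico ((2 * m : ℝ) / 2 ^ (j + 1)) ((2 * m + 1 : ℝ) / 2 ^ (j + 1))).indicator 1
      - (Ico ((2 * m + 1 : ℝ) / 2 ^ (j + 1)) ((2 * m + 2 : ℝ) / 2 ^ (j + 1))).indicator 1 := by
  ext t
  have hp : (0 : ℝ) < 2 ^ (j + 1) := by positivity
  simp only [haar, Pi.sub_apply, indicator, Set.mem_Ico, Pi.one_apply]
  split_ifs with h1 h2 h2 <;> norm_num
  linarith [h1.1, h1.2, h2.1, h2.2]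

theorem measurable_haar (j m : ℕ) : Measurable (haar j m) := by
  rw [haar_eq_indicator_sub_indicator]
  exact (measurable_const.indicator measurableSet_Ico).sub
    (measurable_const.indicator measurableSet_Ico)

theorem abs_haar_le_one (j m : ℕ) (t : ℝ) : |haar j m t| ≤ 1 := by
  unfold haar
  split_ifs <;> norm_num

theorem MeasureTheory.IntegrableOn.mul_haar {f : ℝ → ℝ} {s : Set ℝ} (hf : IntegrableOn f s)
    (j m : ℕ) :
    IntegrableOn (fun t => f t * haar j m t) s :=
  hf.mul_bdd (measurable_haar j m).aestronglyMeasurable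
    (Filter.Eventually.of_forall (abs_haar_le_one j m))

theorem integrableOn_ite_lt {s : Set ℝ} (hs : volume s ≠ ⊤) (x : ℝ) :
    IntegrableOn (fun t => if x < t then (1 : ℝ) else 0) s :=
  (integrableOn_const hs).indicator measurableSet_Ioi

theorem haar_breakpoints_le {j m : ℕ} (hm : m < 2 ^ j) :
    0 ≤ (2 * m : ℝ) / 2 ^ (j + 1) ∧ (2 * m : ℝ) / 2 ^ (j + 1) ≤ (2 * m + 1 : ℝ) / 2 ^ (j + 1)
    ∧ (2 * m + 1 : ℝ) / 2 ^ (j + 1) ≤ (2 * m + 2 : ℝ) / 2 ^ (j + 1)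
    ∧ (2 * m + 2 : ℝ) / 2 ^ (j + 1) ≤ 1 := by
  have hmj : (m : ℝ) + 1 ≤ 2 ^ j := by exact_mod_cast hm
  refine ⟨by positivity, by gcongr; linarith, by gcongr; linarith, ?_⟩
  rw [div_le_one (by positivity), pow_succ]
  linarith

theorem setIntegral_mul_haar {f : ℝ → ℝ} (hf : IntegrableOn f (Ico 0 1)) {j m : ℕ}
    (hm : m < 2 ^ j) :
    ∫ t in Ico (0 : ℝ) 1, f t * haar j m t
      = (∫ t in Ico ((2 * m : ℝ) / 2 ^ (j + 1)) ((2 * m + 1 : ℝ) / 2 ^ (j + 1)), f t)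
        - ∫ t in Ico ((2 * m + 1 : ℝ) / 2 ^ (j + 1)) ((2 * m + 2 : ℝ) / 2 ^ (j + 1)), f t := by
  obtain ⟨h0, h01, h12, h1⟩ := haar_breakpoints_le hm
  have key : ∀ a b : ℝ, 0 ≤ a → b ≤ 1 →
      ∫ t in Ico (0 : ℝ) 1, (Ico a b).indicator f t = ∫ t in Ico a b, f t := fun a b ha hb => by
    rw [setIntegral_indicator measurableSet_Ico,
      inter_eq_self_of_subset_right (Ico_subset_Ico ha hb)]
  simp_rw [haar_eq_indicator_sub_indicator, Pi.sub_apply, mul_sub, ← indicator_mul_right,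
    Pi.one_apply, mul_one]
  rw [integral_sub (hf.indicator measurableSet_Ico) (hf.indicator measurableSet_Ico),
    key _ _ h0 (h12.trans h1), key _ _ (h0.trans h01) h1]

theorem setIntegral_Ico_id {a b : ℝ} (hab : a ≤ b) :
    ∫ t in Ico a b, t = (b ^ 2 - a ^ 2) / 2 := by
  rw [integral_Ico_eq_integral_Ioo, ← integral_Ioc_eq_integral_Ioo,
    ← intervalIntegral.integral_of_le hab, integral_id]

theorem setIntegral_Ico_ite_lt (a b x : ℝ) :
    ∫ t in Ico a b, (if x < t then (1 : ℝ) else 0) = max 0 (b - max a x) := by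
  have h : (fun t => if x < t then (1 : ℝ) else 0) = (Ioi x).indicator 1 := by
    ext t
    simp [indicator]
  rw [integral_Ico_eq_integral_Ioc, h, integral_indicator_one measurableSet_Ioi,
    measureReal_restrict_apply measurableSet_Ioi, inter_comm, Ioc_inter_Ioi, Real.volume_real_Ioc,
    max_comm]

noncomputable def haarCoeffIoi (j m : ℕ) (x : ℝ) : ℝ :=
  ∫ t in Ico (0 : ℝ) 1, (if x < t then (1 : ℝ) else 0) * haar j m t

theorem haarCoeffIoi_eq {j m : ℕ} (hm : m < 2 ^ j) (x : ℝ) :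
    haarCoeffIoi j m x
      = max 0 ((2 * m + 1 : ℝ) / 2 ^ (j + 1) - max ((2 * m : ℝ) / 2 ^ (j + 1)) x)
        - max 0 ((2 * m + 2 : ℝ) / 2 ^ (j + 1) - max ((2 * m + 1 : ℝ) / 2 ^ (j + 1)) x) := by
  rw [haarCoeffIoi, setIntegral_mul_haar (integrableOn_ite_lt (by simp) x) hm,
    setIntegral_Ico_ite_lt, setIntegral_Ico_ite_lt]

theorem abs_haarCoeffIoi_le {j m : ℕ} (hm : m < 2 ^ j) (x : ℝ) :
    |haarCoeffIoi j m x| ≤ 1 / 2 ^ (j + 1) := by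
  have hδ : (0 : ℝ) < 1 / 2 ^ (j + 1) := by positivity
  have hA : max 0 ((2 * m + 1 : ℝ) / 2 ^ (j + 1) - max ((2 * m : ℝ) / 2 ^ (j + 1)) x)
      ≤ 1 / 2 ^ (j + 1) := by
    refine max_le hδ.le ?_
    linarith [le_max_left ((2 * m : ℝ) / 2 ^ (j + 1)) x,
      show (2 * m + 1 : ℝ) / 2 ^ (j + 1) = 2 * m / 2 ^ (j + 1) + 1 / 2 ^ (j + 1) by ring]
  have hB : max 0 ((2 * m + 2 : ℝ) / 2 ^ (j + 1) - max ((2 * m + 1 : ℝ) / 2 ^ (j + 1)) x)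
      ≤ 1 / 2 ^ (j + 1) := by
    refine max_le hδ.le ?_
    linarith [le_max_left ((2 * m + 1 : ℝ) / 2 ^ (j + 1)) x,
      show (2 * m + 2 : ℝ) / 2 ^ (j + 1) = (2 * m + 1) / 2 ^ (j + 1) + 1 / 2 ^ (j + 1) by ring]
  rw [haarCoeffIoi_eq hm]
  exact abs_sub_le_of_nonneg_of_le (le_max_left _ _) hA (le_max_left _ _) hB

theorem haarCoeffIoi_eq_zero {j m : ℕ} (hm : m < 2 ^ j) {x : ℝ}
    (hx : x ∉ Ioo ((m : ℝ) / 2 ^ j) ((m + 1) / 2 ^ j)) : haarCoeffIoi j m x = 0 := by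
  rw [haarCoeffIoi_eq hm]
  have e1 : (2 * m : ℝ) / 2 ^ (j + 1) = m / 2 ^ j := by rw [pow_succ]; field_simp
  have e3 : (2 * m + 2 : ℝ) / 2 ^ (j + 1) = (m + 1) / 2 ^ j := by rw [pow_succ]; field_simp
  obtain ⟨-, h01, h12, -⟩ := haar_breakpoints_le hm
  rw [Set.mem_Ioo, not_and_or, not_lt, not_lt, ← e1, ← e3] at hx
  rcases hx with hx | hx
  · rw [max_eq_left hx, max_eq_left (hx.trans h01), max_eq_right (by linarith),
      max_eq_right (by linarith)]
    ring
  · rw [max_eq_right (h01.trans (h12.trans hx)), max_eq_right (h12.trans hx),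
      max_eq_left (by linarith), max_eq_left (by linarith)]
    ring

theorem setIntegral_id_mul_haar {j m : ℕ} (hm : m < 2 ^ j) :
    ∫ t in Ico (0 : ℝ) 1, t * haar j m t = -(1 / 2 ^ (2 * j + 2)) := by
  obtain ⟨-, h01, h12, -⟩ := haar_breakpoints_le hm
  rw [setIntegral_mul_haar (f := fun t => t)
    (continuous_id.integrableOn_Icc.mono_set Ico_subset_Icc_self) hm, setIntegral_Ico_id h01,
    setIntegral_Ico_id h12, show 2 * j + 2 = (j + 1) * 2 by ring, pow_mul]
  field_simp
  ring

theorem integral_integral_sum_div_sub {α β ι : Type*} [MeasurableSpace α] [MeasurableSpace β]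
    {μ : Measure α} {ν : Measure β} (s : Finset ι) (c : ℝ) {f : ι → α → ℝ} {g : ι → β → ℝ}
    {u : α → ℝ} {v : β → ℝ} (hf : ∀ i ∈ s, Integrable (f i) μ) (hg : ∀ i ∈ s, Integrable (g i) ν)
    (hu : Integrable u μ) (hv : Integrable v ν) :
    ∫ x, ∫ y, ((∑ i ∈ s, f i x * g i y) / c - u x * v y) ∂ν ∂μ
      = (∑ i ∈ s, (∫ x, f i x ∂μ) * ∫ y, g i y ∂ν) / c - (∫ x, u x ∂μ) * ∫ y, v y ∂ν := by
  have inner : ∀ x, ∫ y, ((∑ i ∈ s, f i x * g i y) / c - u x * v y) ∂ν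
      = (∑ i ∈ s, f i x * ∫ y, g i y ∂ν) / c - u x * ∫ y, v y ∂ν := fun x => by
    rw [integral_sub ((integrable_finsetSum s fun i hi => (hg i hi).const_mul _).div_const c)
      (hv.const_mul _), integral_div, integral_finsetSum s fun i hi => (hg i hi).const_mul _,
      integral_const_mul]
    simp_rw [integral_const_mul]
  simp_rw [inner]
  rw [integral_sub ((integrable_finsetSum s fun i hi => (hf i hi).mul_const _).div_const c)
    (hu.mul_const _), integral_div, integral_finsetSum s fun i hi => (hf i hi).mul_const _,
    integral_mul_const]
  simp_rw [integral_mul_const]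

theorem integral_integral_discSym_mul_haar (n : ℕ) (σ : Fin n → Bool) (j1 j2 m1 m2 : ℕ) :
    ∫ t1 in Ico (0 : ℝ) 1, ∫ t2 in Ico (0 : ℝ) 1,
      discSym n σ t1 t2 * haar j1 m1 t1 * haar j2 m2 t2
      = (∑ z, haarCoeffIoi j1 m1 (symPoint n σ z).1 * haarCoeffIoi j2 m2 (symPoint n σ z).2)
          / 2 ^ (n + 2)
        - (∫ t in Ico (0 : ℝ) 1, t * haar j1 m1 t) * ∫ t in Ico (0 : ℝ) 1, t * haar j2 m2 t := by
  have hsplit : ∀ t1 t2, discSym n σ t1 t2 * haar j1 m1 t1 * haar j2 m2 t2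
      = (∑ z, ((if (symPoint n σ z).1 < t1 then (1 : ℝ) else 0) * haar j1 m1 t1)
          * ((if (symPoint n σ z).2 < t2 then (1 : ℝ) else 0) * haar j2 m2 t2)) / 2 ^ (n + 2)
        - (t1 * haar j1 m1 t1) * (t2 * haar j2 m2 t2) := fun t1 t2 => by
    simp_rw [discSym, ite_and, ite_mul, one_mul, zero_mul, sub_mul, sum_div, sum_mul]
    congr 1
    · refine sum_congr rfl fun z _ => ?_
      split_ifs <;> ring
    · ring
  have hI : volume (Ico (0 : ℝ) 1) ≠ ⊤ := by simp
  have hid : IntegrableOn (fun t : ℝ => t) (Ico 0 1) :=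
    continuous_id.integrableOn_Icc.mono_set Ico_subset_Icc_self
  simp_rw [hsplit]
  exact integral_integral_sum_div_sub _ _
    (fun z _ => (integrableOn_ite_lt hI _).mul_haar j1 m1)
    (fun z _ => (integrableOn_ite_lt hI _).mul_haar j2 m2)
    (hid.mul_haar j1 m1) (hid.mul_haar j2 m2)

theorem Finset.sum_abs_le_of_card_filter_le {ι : Type*} {s : Finset ι} {p : ι → Prop}
    [DecidablePred p] {k : ℕ} (hk : #{i ∈ s | p i} ≤ k) {f : ι → ℝ} {B : ℝ}
    (hp : ∀ i ∈ s, f i ≠ 0 → p i) (hB : ∀ i ∈ s, |f i| ≤ B) (hB0 : 0 ≤ B) :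
    ∑ i ∈ s, |f i| ≤ k * B := by
  rw [← sum_filter_of_ne fun i hi h => hp i hi (abs_ne_zero.mp h)]
  calc _ ≤ #{i ∈ s | p i} • B := sum_le_card_nsmul _ _ _ fun i hi => hB i (mem_filter.mp hi).1
    _ ≤ k * B := by rw [nsmul_eq_mul]; gcongr

theorem abs_div_sub_mul_le_one_div_two_pow {n j1 j2 : ℕ} (hj : n ≤ j1 + j2 + 1) {S : ℝ}
    (hS : |S| ≤ 8 * (1 / 2 ^ (j1 + 1) * (1 / 2 ^ (j2 + 1)))) :
    |S / 2 ^ (n + 2) - -(1 / 2 ^ (2 * j1 + 2)) * -(1 / 2 ^ (2 * j2 + 2))|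
      ≤ 1 / 2 ^ (n + j1 + j2) := by
  have hsum : 8 * (1 / 2 ^ (j1 + 1) * (1 / 2 ^ (j2 + 1))) / 2 ^ (n + 2)
      = 1 / 2 * (1 / 2 ^ (n + j1 + j2) : ℝ) := by
    simp only [pow_add]
    field_simp
    norm_num
  have hprod : 1 / 2 ^ (2 * j1 + 2) * (1 / 2 ^ (2 * j2 + 2))
      ≤ 1 / 8 * (1 / 2 ^ (n + j1 + j2) : ℝ) := by
    rw [div_mul_div_comm, div_mul_div_comm, ← pow_add, show (8 : ℝ) = 2 ^ 3 by norm_num, ← pow_add,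
      one_mul]
    exact one_div_le_one_div_of_le (by positivity) (pow_le_pow_right₀ (by norm_num) (by omega))
  have hdiv : |S / 2 ^ (n + 2)| ≤ 1 / 2 * (1 / 2 ^ (n + j1 + j2)) := by
    rw [abs_div, abs_of_pos (by positivity : (0 : ℝ) < 2 ^ (n + 2)), ← hsum]
    gcongr
  have hpos : (0 : ℝ) < 1 / 2 ^ (2 * j1 + 2) * (1 / 2 ^ (2 * j2 + 2)) := by positivity
  rw [neg_mul_neg, abs_sub_le_iff]
  constructor <;> linarith [abs_le.mp hdiv]

/-- Proposition (ii), first part: for the local discrepancy `D` of the symmetrized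
Hammersley type multiset `R̃_n`, if `j₁ + j₂ ≥ n - 1` and `j₁, j₂ ≤ n` then
`|μ_{(j₁,j₂),(m₁,m₂)}(D)| ≤ 2^{-(n+j₁+j₂)}`. -/
theorem disc_haar_coeff_medium (n : ℕ) (σ : Fin n → Bool) (j1 j2 m1 m2 : ℕ)
    (hj : n ≤ j1 + j2 + 1) (hj1 : j1 ≤ n) (hj2 : j2 ≤ n)
    (h1 : m1 < 2 ^ j1) (h2 : m2 < 2 ^ j2) :
    |∫ t1 in Set.Ico (0 : ℝ) 1, ∫ t2 in Set.Ico (0 : ℝ) 1,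
      discSym n σ t1 t2 * haar j1 m1 t1 * haar j2 m2 t2| ≤ 1 / 2 ^ (n + j1 + j2) := by
  rw [integral_integral_discSym_mul_haar, setIntegral_id_mul_haar h1, setIntegral_id_mul_haar h2]
  refine abs_div_sub_mul_le_one_div_two_pow hj ((abs_sum_le_sum_abs _ _).trans ?_)
  refine (sum_abs_le_of_card_filter_le (card_symPoint_mem_box_le_eight σ hj hj1 hj2 h1 h2)
    (B := 1 / 2 ^ (j1 + 1) * (1 / 2 ^ (j2 + 1))) (fun z _ hz => ?_) (fun z _ => ?_)
    (by positivity)).trans_eq (by norm_num)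
  · rw [mul_ne_zero_iff] at hz
    exact ⟨by_contra fun h => hz.1 (haarCoeffIoi_eq_zero h1 h),
      by_contra fun h => hz.2 (haarCoeffIoi_eq_zero h2 h)⟩
  · rw [abs_mul]
    exact mul_le_mul (abs_haarCoeffIoi_le h1 _) (abs_haarCoeffIoi_le h2 _) (abs_nonneg _)
      (by positivity)
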